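/- Let (E, d) be a compact metric space, Ω a measurable space, and (Φ_n : Ω → E) a sequence of measurable functions. Then there exist measurable functions σ_n : Ω → ℕ with σ_n(ω) < σ_{n+1}(ω) for all n and ω, and a measurable function Ψ : Ω → E, such that for every ω the subsequence Φ_{σ_n(ω)}(ω) converges to Ψ(ω). -/
import Mathlib

open Filter Set Metric

section Aux

variable {Ω : Type*} {E : Type*} [MetricSpace E]

lemma ms_pigeonhole [CompactSpace E] {x : ℕ → E} (hx : DenseRange x)
    (f : ℕ → E) (S : Set ℕ) (hS : S.Infinite) {r : ℝ} (hr : 0 < r) :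
    ∃ k, ({n | dist (f n) (x k) ≤ r} ∩ S).Infinite := by
  obtain ⟨t, ht⟩ := isCompact_univ.elim_finite_subcover (fun k => Metric.ball (x k) r)
    (fun k => isOpen_ball) (fun y _ => by
      obtain ⟨k, hk⟩ := hx.exists_dist_lt y hr
      exact mem_iUnion.2 ⟨k, by simpa [Metric.mem_ball, dist_comm] using hk⟩)
  by_contra h
  push_neg at h
  have hsub : S ⊆ ⋃ k ∈ t, ({n | dist (f n) (x k) ≤ r} ∩ S) := by
    intro n hn
    have h2 := ht (mem_univ (f n))
    simp only [mem_iUnion, Metric.mem_ball] at h2 ⊢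
    obtain ⟨k, hk, hk2⟩ := h2
    exact ⟨k, hk, le_of_lt hk2, hn⟩
  exact hS ((Set.Finite.biUnion t.finite_toSet fun k _ => h k).subset hsub)

noncomputable def msCenter (Φ : ℕ → Ω → E) (x : ℕ → E) : ℕ → Ω → ℕ
  | m => fun ω => sInf {k | {n | dist (Φ n ω) (x k) ≤ (1/2 : ℝ)^m ∧
      ∀ j, j < m → dist (Φ n ω) (x (msCenter Φ x j ω)) ≤ (1/2 : ℝ)^j}.Infinite}
  termination_by m => m

def msA (Φ : ℕ → Ω → E) (x : ℕ → E) (m : ℕ) (ω : Ω) : Set ℕ :=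
  {n | ∀ j, j < m → dist (Φ n ω) (x (msCenter Φ x j ω)) ≤ (1/2 : ℝ)^j}

lemma msCenter_eq (Φ : ℕ → Ω → E) (x : ℕ → E) (m : ℕ) (ω : Ω) :
    msCenter Φ x m ω =
      sInf {k | ({n | dist (Φ n ω) (x k) ≤ (1/2 : ℝ)^m} ∩ msA Φ x m ω).Infinite} := by
  rw [msCenter]
  rfl

lemma msA_succ (Φ : ℕ → Ω → E) (x : ℕ → E) (m : ℕ) (ω : Ω) :
    msA Φ x (m+1) ω =
      {n | dist (Φ n ω) (x (msCenter Φ x m ω)) ≤ (1/2 : ℝ)^m} ∩ msA Φ x m ω := by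
  ext n
  simp only [msA, mem_setOf_eq, Set.mem_inter_iff, Nat.lt_succ_iff_lt_or_eq]
  constructor
  · intro h
    exact ⟨h m (Or.inr rfl), fun j hj => h j (Or.inl hj)⟩
  · rintro ⟨h1, h2⟩ j (hj | rfl)
    · exact h2 j hj
    · exact h1

lemma msA_infinite [CompactSpace E] {x : ℕ → E} (hx : DenseRange x)
    (Φ : ℕ → Ω → E) (m : ℕ) (ω : Ω) : (msA Φ x m ω).Infinite := by
  induction m with
  | zero =>
      have : msA Φ x 0 ω = Set.univ := by
        ext n; simp [msA]
      rw [this]; exact Set.infinite_univ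
  | succ m ih =>
      have hne : {k | ({n | dist (Φ n ω) (x k) ≤ (1/2 : ℝ)^m} ∩ msA Φ x m ω).Infinite}.Nonempty :=
        ms_pigeonhole hx (fun n => Φ n ω) (msA Φ x m ω) ih (by positivity)
      rw [msA_succ, msCenter_eq]
      exact Nat.sInf_mem hne

noncomputable def msSigma (Φ : ℕ → Ω → E) (x : ℕ → E) : ℕ → Ω → ℕ
  | 0 => fun ω => sInf (msA Φ x 1 ω)
  | (m+1) => fun ω => sInf {n | n ∈ msA Φ x (m+2) ω ∧ msSigma Φ x m ω < n}

lemma msSigma_mem [CompactSpace E] {x : ℕ → E} (hx : DenseRange x)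
    (Φ : ℕ → Ω → E) (m : ℕ) (ω : Ω) : msSigma Φ x m ω ∈ msA Φ x (m+1) ω := by
  cases m with
  | zero => exact Nat.sInf_mem (msA_infinite hx Φ 1 ω).nonempty
  | succ m =>
      have hne : {n | n ∈ msA Φ x (m+2) ω ∧ msSigma Φ x m ω < n}.Nonempty := by
        obtain ⟨b, hb, hb2⟩ := (msA_infinite hx Φ (m+2) ω).exists_gt (msSigma Φ x m ω)
        exact ⟨b, hb, hb2⟩
      exact (Nat.sInf_mem hne).1

lemma msSigma_lt [CompactSpace E] {x : ℕ → E} (hx : DenseRange x)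
    (Φ : ℕ → Ω → E) (m : ℕ) (ω : Ω) : msSigma Φ x m ω < msSigma Φ x (m+1) ω := by
  have hne : {n | n ∈ msA Φ x (m+2) ω ∧ msSigma Φ x m ω < n}.Nonempty := by
    obtain ⟨b, hb, hb2⟩ := (msA_infinite hx Φ (m+2) ω).exists_gt (msSigma Φ x m ω)
    exact ⟨b, hb, hb2⟩
  exact (Nat.sInf_mem hne).2

-- measurability helpers

lemma measurable_sInf_nat [MeasurableSpace Ω] {p : ℕ → Ω → Prop}
    (hp : ∀ k, MeasurableSet {ω | p k ω}) :
    Measurable fun ω => sInf {k | p k ω} := by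
  apply measurable_to_countable'
  intro k
  have hset : (fun ω => sInf {k | p k ω}) ⁻¹' {k} =
      ({ω | p k ω} ∩ ⋂ j, ⋂ (_ : j < k), {ω | ¬ p j ω}) ∪
      ({ω' : Ω | k = 0} ∩ ⋂ j, {ω | ¬ p j ω}) := by
    ext ω
    simp only [Set.mem_preimage, Set.mem_singleton_iff, Set.mem_union, Set.mem_inter_iff,
      Set.mem_iInter, mem_setOf_eq]
    constructor
    · rintro rfl
      by_cases hne : {j | p j ω}.Nonempty
      · left
        exact ⟨Nat.sInf_mem hne, fun j hj => Nat.notMem_of_lt_sInf hj⟩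
      · right
        rw [Set.not_nonempty_iff_eq_empty] at hne
        refine ⟨?_, fun j hj => ?_⟩
        · rw [hne]; exact Nat.sInf_empty
        · have : j ∈ {j | p j ω} := hj
          rw [hne] at this; exact this
    · rintro (⟨h1, h2⟩ | ⟨h1, h2⟩)
      · refine le_antisymm (Nat.sInf_le h1) ?_
        by_contra hlt
        push_neg at hlt
        have hmem : sInf {j | p j ω} ∈ {j | p j ω} := Nat.sInf_mem ⟨k, h1⟩
        exact h2 _ hlt hmem
      · have : {j | p j ω} = ∅ := by
          ext j; simpa using h2 j
        rw [this, Nat.sInf_empty, h1]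
  rw [hset]
  refine MeasurableSet.union (MeasurableSet.inter (hp k) ?_) (MeasurableSet.inter ?_ ?_)
  · exact MeasurableSet.iInter fun j => MeasurableSet.iInter fun _ => (hp j).compl
  · by_cases hk : k = 0 <;> simp [hk]
  · exact MeasurableSet.iInter fun j => (hp j).compl

lemma measurableSet_infinite [MeasurableSpace Ω] {q : ℕ → Ω → Prop}
    (hq : ∀ n, MeasurableSet {ω | q n ω}) :
    MeasurableSet {ω | {n | q n ω}.Infinite} := by
  have : {ω | {n | q n ω}.Infinite} = ⋂ N, ⋃ n, ⋃ (_ : N ≤ n), {ω | q n ω} := by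
    ext ω
    simp only [Set.mem_iInter, Set.mem_iUnion, mem_setOf_eq]
    rw [← Nat.frequently_atTop_iff_infinite, frequently_atTop]
    simp only [ge_iff_le, exists_prop]
  rw [this]
  exact MeasurableSet.iInter fun N => MeasurableSet.iUnion fun n =>
    MeasurableSet.iUnion fun _ => hq n

lemma msCenter_measurable [MeasurableSpace Ω] [SecondCountableTopology E] [MeasurableSpace E] [BorelSpace E]
    (Φ : ℕ → Ω → E) (hΦ : ∀ n, Measurable (Φ n)) (x : ℕ → E) (m : ℕ) :
    Measurable (msCenter Φ x m) := by
  induction m using Nat.strong_induction_on with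
  | _ m ih =>
    have heq : msCenter Φ x m = fun ω => sInf {k | {n | dist (Φ n ω) (x k) ≤ (1/2 : ℝ)^m ∧
        ∀ j, j < m → dist (Φ n ω) (x (msCenter Φ x j ω)) ≤ (1/2 : ℝ)^j}.Infinite} := by
      funext ω; rw [msCenter]
    rw [heq]
    apply measurable_sInf_nat
    intro k
    apply measurableSet_infinite
    intro n
    have h1 : MeasurableSet {ω : Ω | dist (Φ n ω) (x k) ≤ (1/2 : ℝ)^m} :=
      measurableSet_le ((hΦ n).dist measurable_const) measurable_const
    have h2 : ∀ j, j < m → MeasurableSet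
        {ω : Ω | dist (Φ n ω) (x (msCenter Φ x j ω)) ≤ (1/2 : ℝ)^j} := fun j hj =>
      measurableSet_le ((hΦ n).dist (measurable_from_top.comp (ih j hj))) measurable_const
    have : {ω : Ω | dist (Φ n ω) (x k) ≤ (1/2 : ℝ)^m ∧
        ∀ j, j < m → dist (Φ n ω) (x (msCenter Φ x j ω)) ≤ (1/2 : ℝ)^j}
        = {ω : Ω | dist (Φ n ω) (x k) ≤ (1/2 : ℝ)^m} ∩
          ⋂ j, ⋂ (_ : j < m), {ω : Ω | dist (Φ n ω) (x (msCenter Φ x j ω)) ≤ (1/2 : ℝ)^j} := by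
      ext ω; simp [mem_setOf_eq]
    rw [this]
    exact h1.inter (MeasurableSet.iInter fun j => MeasurableSet.iInter fun hj => h2 j hj)

lemma msA_measurableSet [MeasurableSpace Ω] [SecondCountableTopology E] [MeasurableSpace E] [BorelSpace E]
    (Φ : ℕ → Ω → E) (hΦ : ∀ n, Measurable (Φ n)) (x : ℕ → E) (m n : ℕ) :
    MeasurableSet {ω : Ω | n ∈ msA Φ x m ω} := by
  have : {ω : Ω | n ∈ msA Φ x m ω} =
      ⋂ j, ⋂ (_ : j < m), {ω : Ω | dist (Φ n ω) (x (msCenter Φ x j ω)) ≤ (1/2 : ℝ)^j} := by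
    ext ω; simp [msA, mem_setOf_eq]
  rw [this]
  exact MeasurableSet.iInter fun j => MeasurableSet.iInter fun hj =>
    measurableSet_le ((hΦ n).dist
      (measurable_from_top.comp (msCenter_measurable Φ hΦ x j))) measurable_const

lemma msSigma_measurable [MeasurableSpace Ω] [SecondCountableTopology E] [MeasurableSpace E] [BorelSpace E]
    (Φ : ℕ → Ω → E) (hΦ : ∀ n, Measurable (Φ n)) (x : ℕ → E) (m : ℕ) :
    Measurable (msSigma Φ x m) := by
  induction m with
  | zero =>
      have : msSigma Φ x 0 = fun ω => sInf {n | n ∈ msA Φ x 1 ω} := by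
        funext ω; rfl
      rw [this]
      exact measurable_sInf_nat fun n => msA_measurableSet Φ hΦ x 1 n
  | succ m ih =>
      have : msSigma Φ x (m+1) =
          fun ω => sInf {n | n ∈ msA Φ x (m+2) ω ∧ msSigma Φ x m ω < n} := by
        funext ω; rfl
      rw [this]
      refine measurable_sInf_nat fun n => ?_
      have : {ω : Ω | n ∈ msA Φ x (m+2) ω ∧ msSigma Φ x m ω < n} =
          {ω : Ω | n ∈ msA Φ x (m+2) ω} ∩ {ω : Ω | msSigma Φ x m ω < n} := rfl
      rw [this]
      exact (msA_measurableSet Φ hΦ x (m+2) n).inter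
        (measurableSet_lt ih measurable_const)

end Aux

/-- Measurable-subsequence extraction: if `(E, d)` is a compact metric space and
`(Φ_n : Ω → E)` is a sequence of measurable functions, then there exist measurable
`σ_n : Ω → ℕ`, strictly increasing in `n` pointwise, and a measurable `Ψ : Ω → E` such that
for every `ω` the subsequence `Φ_{σ_n(ω)}(ω)` converges to `Ψ(ω)`. -/
theorem measurable_subsequence_extraction
    {Ω : Type*} [MeasurableSpace Ω]
    {E : Type*} [MetricSpace E] [CompactSpace E] [MeasurableSpace E] [BorelSpace E]
    (Φ : ℕ → Ω → E) (hΦ : ∀ n, Measurable (Φ n)) :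
    ∃ σ : ℕ → Ω → ℕ, (∀ n, Measurable (σ n)) ∧
      (∀ n ω, σ n ω < σ (n + 1) ω) ∧
      ∃ Ψ : Ω → E, Measurable Ψ ∧
        ∀ ω, Tendsto (fun n => Φ (σ n ω) ω) atTop (nhds (Ψ ω)) := by
  by_cases hΩ : Nonempty Ω
  case neg =>
    rw [not_nonempty_iff] at hΩ
    refine ⟨fun n _ => n, fun n => measurable_const, fun n ω => hΩ.elim ω,
      fun ω => (Φ 0 ω), hΦ 0, fun ω => hΩ.elim ω⟩
  case pos =>
    obtain ⟨ω₀⟩ := hΩ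
    haveI : Nonempty E := ⟨Φ 0 ω₀⟩
    obtain ⟨x, hx⟩ := TopologicalSpace.exists_dense_seq E
    refine ⟨msSigma Φ x, fun n => msSigma_measurable Φ hΦ x n,
      fun n ω => msSigma_lt hx Φ n ω, ?_⟩
    -- key distance estimate
    have key : ∀ (M m : ℕ) (ω : Ω), M ≤ m →
        dist (Φ (msSigma Φ x m ω) ω) (x (msCenter Φ x M ω)) ≤ (1/2 : ℝ)^M := by
      intro M m ω hMm
      exact msSigma_mem hx Φ m ω M (Nat.lt_succ_of_le hMm)
    have hcauchy : ∀ ω, CauchySeq (fun m => Φ (msSigma Φ x m ω) ω) := by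
      intro ω
      apply cauchySeq_of_le_geometric (1/2 : ℝ) 2 (by norm_num)
      intro n
      calc dist (Φ (msSigma Φ x n ω) ω) (Φ (msSigma Φ x (n+1) ω) ω)
          ≤ dist (Φ (msSigma Φ x n ω) ω) (x (msCenter Φ x n ω)) +
            dist (Φ (msSigma Φ x (n+1) ω) ω) (x (msCenter Φ x n ω)) :=
            dist_triangle_right _ _ _
        _ ≤ (1/2 : ℝ)^n + (1/2 : ℝ)^n := by
            gcongr
            · exact key n n ω le_rfl
            · exact key n (n+1) ω (Nat.le_succ n)
        _ = 2 * (1/2 : ℝ)^n := by ring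
    have hconv : ∀ ω, ∃ a : E, Tendsto (fun m => Φ (msSigma Φ x m ω) ω) atTop (nhds a) :=
      fun ω => cauchySeq_tendsto_of_complete (hcauchy ω)
    refine ⟨fun ω => (hconv ω).choose, ?_, fun ω => (hconv ω).choose_spec⟩
    apply measurable_of_tendsto_metrizable
      (f := fun m ω => Φ (msSigma Φ x m ω) ω)
    · intro m
      have : (fun ω => Φ (msSigma Φ x m ω) ω) =
          (fun p : Ω × ℕ => Φ p.2 p.1) ∘ (fun ω => (ω, msSigma Φ x m ω)) := rfl
      rw [this]
      exact (measurable_from_prod_countable_left fun n => hΦ n).comp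
        (measurable_id.prodMk (msSigma_measurable Φ hΦ x m))
    · exact tendsto_pi_nhds.2 fun ω => (hconv ω).choose_spec
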